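/- Let G be an (n−k)-regular bipartite false twin-free graph on 2n vertices with bipartition A ∪ B and γ_t(G) = γ_gr^t(G) = 6, let a_1 ≠ a_2 be vertices of A, and set B_2 = N(a_1)\N(a_2), B_1 = N(a_2)\N(a_1), B' = N(a_1) ∩ N(a_2), and A' = {a ∈ A\{a_1,a_2} : N(a) ⊆ B_1 ∪ B_2 ∪ B'}. Then for every x ∈ A', B_1 ∪ B_2 ⊆ N(x) and x has exactly k − 1 non-neighbors in B'. -/

import Mathlib

/-!
Legal sequences lying in `A` and in `B` can be concatenated, since the vertices totally dominated
by vertices of `A` lie in `B` and vice versa. If every vertex missed at most one vertex of the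
other side, two vertices from each side would totally dominate `G`; so `k ≥ 2`, two vertices of
`A` share a non-neighbour, and this yields a legal sequence of length 3 inside `A`, and likewise
inside `B`. Thus `γ_gr^t(G) = 6` forbids legal sequences of length 4 inside one side. Hence any
two vertices of `A` have exactly one common non-neighbour: with none, they and a legal triple of
`B` would form a total dominating set of size 5 unless that triple extends to a legal 4-sequence
in `B`; with two, `A` would contain a legal 4-sequence. For `x ∈ A'`, a vertex of `B₁` missed by
`x` would make `(a₁, x, a₂, c)` legal, where `c` is a neighbour of the common non-neighbour of
`a₁, a₂`. Finally `B \ N(x)` consists of that common non-neighbour and of `B' \ N(x)`.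
-/

/-- `S` is a total dominating set of `G`: every vertex has a neighbor in `S`. -/
def IsTotalDomSet {V : Type*} (G : SimpleGraph V) (S : Set V) : Prop :=
  ∀ v : V, ∃ u ∈ S, G.Adj v u

/-- `l` is a legal sequence of `G`: the vertices are distinct and every vertex
(except possibly the first) totally dominates a vertex not totally dominated
by the previous vertices. -/
def IsLegalSeq {V : Type*} (G : SimpleGraph V) (l : List V) : Prop :=
  l.Nodup ∧ ∀ i : Fin l.length, 0 < (i : ℕ) →
    ∃ w : V, G.Adj (l.get i) w ∧ ∀ j : Fin l.length, (j : ℕ) < (i : ℕ) → ¬ G.Adj (l.get j) w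

/-- `l` is a total dominating sequence of `G`. -/
def IsTotalDomSeq {V : Type*} (G : SimpleGraph V) (l : List V) : Prop :=
  IsLegalSeq G l ∧ IsTotalDomSet G {v | v ∈ l}

/-- The Grundy total domination number of `G`: the maximum length of a total
dominating sequence. -/
noncomputable def grundyTotalDomNum {V : Type*} (G : SimpleGraph V) : ℕ :=
  sSup {k : ℕ | ∃ l : List V, IsTotalDomSeq G l ∧ l.length = k}

/-- The total domination number of `G`: the minimum cardinality of a total
dominating set. -/
noncomputable def totalDomNum {V : Type*} (G : SimpleGraph V) : ℕ :=
  sInf {k : ℕ | ∃ S : Set V, IsTotalDomSet G S ∧ S.ncard = k}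

/-- `A`, `B` is a bipartition of `G`. -/
def IsBipartitionOf {V : Type*} (G : SimpleGraph V) (A B : Set V) : Prop :=
  (∀ v : V, (v ∈ A ∧ v ∉ B) ∨ (v ∈ B ∧ v ∉ A)) ∧
  ∀ ⦃u v : V⦄, G.Adj u v → (u ∈ A ∧ v ∈ B) ∨ (u ∈ B ∧ v ∈ A)

/-- `G` has no false twins: distinct vertices have distinct open neighborhoods. -/
def FalseTwinFree {V : Type*} (G : SimpleGraph V) : Prop :=
  ∀ u v : V, u ≠ v → G.neighborSet u ≠ G.neighborSet v

/-- `G` has no isolated vertices. -/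
def NoIsolatedVerts {V : Type*} (G : SimpleGraph V) : Prop :=
  ∀ v : V, ∃ u : V, G.Adj v u


section

variable {V : Type*} {G : SimpleGraph V}

namespace IsBipartitionOf

variable {A B : Set V}

theorem symm (h : IsBipartitionOf G A B) : IsBipartitionOf G B A :=
  ⟨fun v => (h.1 v).symm, fun _ _ huv => (h.2 huv).symm⟩

theorem isBipartiteWith (h : IsBipartitionOf G A B) : G.IsBipartiteWith A B :=
  ⟨Set.disjoint_left.2 fun v hA hB => by rcases h.1 v with h' | h' <;> tauto, h.2⟩

theorem mem_or_mem (h : IsBipartitionOf G A B) (v : V) : v ∈ A ∨ v ∈ B :=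
  (h.1 v).imp And.left And.left

theorem neighborSet_subset (h : IsBipartitionOf G A B) {a : V} (ha : a ∈ A) :
    G.neighborSet a ⊆ B :=
  SimpleGraph.isBipartiteWith_neighborSet_subset h.isBipartiteWith ha

theorem not_adj (h : IsBipartitionOf G A B) {a a' : V} (ha : a ∈ A) (ha' : a' ∈ A) :
    ¬ G.Adj a a' :=
  fun hadj => Set.disjoint_left.1 h.isBipartiteWith.disjoint ha' (h.neighborSet_subset ha hadj)

theorem ncard_add_ncard [Finite V] (h : IsBipartitionOf G A B) :
    A.ncard + B.ncard = Nat.card V := by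
  rw [← Set.ncard_union_eq h.isBipartiteWith.disjoint, ← Set.ncard_univ,
    Set.eq_univ_of_forall (s := A ∪ B) h.mem_or_mem]

theorem ncard_eq_ncard [Fintype V] (h : IsBipartitionOf G A B) {d : ℕ}
    (hreg : ∀ v, (G.neighborSet v).ncard = d) (hd : 0 < d) : A.ncard = B.ncard := by
  classical
  have hsum := SimpleGraph.isBipartiteWith_sum_degrees_eq (s := A.toFinset) (t := B.toFinset)
    (by simpa using h.isBipartiteWith)
  have hdeg (v : V) : G.degree v = d := by
    rw [← hreg v, ← SimpleGraph.card_neighborSet_eq_degree, Set.ncard_eq_toFinset_card',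
      Set.toFinset_card]
  simp only [hdeg, Finset.sum_const, smul_eq_mul, Set.toFinset_card] at hsum
  rw [Set.ncard_eq_toFinset_card', Set.ncard_eq_toFinset_card', Set.toFinset_card,
    Set.toFinset_card]
  exact Nat.eq_of_mul_eq_mul_right hd hsum

end IsBipartitionOf

theorem FalseTwinFree.exists_adj_not_adj [Finite V] (h : FalseTwinFree G) {u v : V} (huv : u ≠ v)
    (hcard : (G.neighborSet u).ncard = (G.neighborSet v).ncard) :
    ∃ w, G.Adj v w ∧ ¬ G.Adj u w := by
  by_contra! hsub
  exact h u v huv (Set.eq_of_subset_of_ncard_le hsub hcard.le).symm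

theorem totalDomNum_le_ncard {S : Set V} (hS : IsTotalDomSet G S) : totalDomNum G ≤ S.ncard :=
  Nat.sInf_le ⟨S, hS, rfl⟩

theorem noIsolatedVerts_of_totalDomNum_pos (h : 0 < totalDomNum G) : NoIsolatedVerts G := by
  obtain ⟨_, S, hS, -⟩ := Nat.nonempty_of_pos_sInf h
  exact fun v => (hS v).imp fun _ hu => hu.2

theorem NoIsolatedVerts.isTotalDomSet_univ (h : NoIsolatedVerts G) : IsTotalDomSet G Set.univ :=
  fun v => (h v).imp fun _ hu => ⟨trivial, hu⟩

theorem isLegalSeq_iff_getElem {l : List V} :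
    IsLegalSeq G l ↔ l.Nodup ∧ ∀ i (hi : i < l.length), 0 < i →
      ∃ w, G.Adj l[i] w ∧ ∀ j (hj : j < i), ¬ G.Adj l[j] w := by
  refine and_congr_right fun _ => ⟨fun h i hi hpos => ?_, fun h i hpos => ?_⟩
  · obtain ⟨w, hw, hprev⟩ := h ⟨i, hi⟩ hpos
    exact ⟨w, hw, fun j hj => hprev ⟨j, hj.trans hi⟩ hj⟩
  · obtain ⟨w, hw, hprev⟩ := h i i.2 hpos
    exact ⟨w, hw, fun j hj => hprev j hj⟩

theorem isLegalSeq_singleton (v : V) : IsLegalSeq G [v] :=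
  isLegalSeq_iff_getElem.2 ⟨List.nodup_singleton v, fun i hi hpos => by simp at hi; omega⟩

theorem IsLegalSeq.concat {l : List V} {v w : V} (hl : IsLegalSeq G l) (hvw : G.Adj v w)
    (hw : ∀ u ∈ l, ¬ G.Adj u w) : IsLegalSeq G (l ++ [v]) := by
  rw [isLegalSeq_iff_getElem] at hl ⊢
  obtain ⟨hnd, hleg⟩ := hl
  have hvl : v ∉ l := fun hv => hw v hv hvw
  refine ⟨hnd.append (List.nodup_singleton v) (by simpa using hvl), fun i hi hpos => ?_⟩
  rw [List.length_append, List.length_singleton] at hi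
  rcases Nat.lt_succ_iff_lt_or_eq.1 hi with hi | rfl
  · obtain ⟨w', hw', hprev⟩ := hleg i hi hpos
    refine ⟨w', by rwa [List.getElem_append_left hi], fun j hj => ?_⟩
    rw [List.getElem_append_left (hj.trans hi)]
    exact hprev j hj
  · refine ⟨w, by simpa using hvw, fun j hj => ?_⟩
    rw [List.getElem_append_left hj]
    exact hw _ (List.getElem_mem hj)

theorem IsLegalSeq.append {l₁ l₂ : List V} (h₁ : IsLegalSeq G l₁) (h₂ : IsLegalSeq G l₂)
    (hnbr : ∀ v ∈ l₂, ∃ w, G.Adj v w)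
    (hsep : ∀ u ∈ l₁, ∀ v ∈ l₂, ∀ w, G.Adj v w → ¬ G.Adj u w) :
    IsLegalSeq G (l₁ ++ l₂) := by
  rw [isLegalSeq_iff_getElem] at h₁ h₂ ⊢
  obtain ⟨hnd₁, hleg₁⟩ := h₁
  obtain ⟨hnd₂, hleg₂⟩ := h₂
  have hdisj : ∀ u ∈ l₁, ∀ v ∈ l₂, u ≠ v := by
    rintro u hu v hv rfl
    obtain ⟨w, hw⟩ := hnbr u hv
    exact hsep u hu u hv w hw hw
  refine ⟨List.nodup_append.2 ⟨hnd₁, hnd₂, hdisj⟩, fun i hi hpos => ?_⟩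
  rw [List.length_append] at hi
  by_cases hi₁ : i < l₁.length
  · obtain ⟨w, hw, hprev⟩ := hleg₁ i hi₁ hpos
    refine ⟨w, by rwa [List.getElem_append_left hi₁], fun j hj => ?_⟩
    rw [List.getElem_append_left (hj.trans hi₁)]
    exact hprev j hj
  · obtain ⟨i', rfl⟩ := Nat.exists_eq_add_of_le (not_lt.1 hi₁)
    have hi' : i' < l₂.length := by omega
    have hprev₁ (w : V) (hw : G.Adj l₂[i'] w) (j : ℕ) (hj : j < l₁.length) :
        ¬ G.Adj (l₁ ++ l₂)[j] w := by
      rw [List.getElem_append_left hj]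
      exact hsep _ (List.getElem_mem hj) _ (List.getElem_mem hi') w hw
    simp only [List.getElem_append_right (Nat.le_add_right _ _), Nat.add_sub_cancel_left]
    rcases Nat.eq_zero_or_pos i' with rfl | hpos'
    · obtain ⟨w, hw⟩ := hnbr _ (List.getElem_mem hi')
      exact ⟨w, hw, fun j hj => hprev₁ w hw j (by omega)⟩
    · obtain ⟨w, hw, hprev₂⟩ := hleg₂ i' hi' hpos'
      refine ⟨w, hw, fun j hj => ?_⟩
      by_cases hj₁ : j < l₁.length
      · exact hprev₁ w hw j hj₁
      · rw [List.getElem_append_right (not_lt.1 hj₁)]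
        exact hprev₂ _ (by omega)

theorem IsLegalSeq.exists_isTotalDomSeq [Fintype V] (hG : NoIsolatedVerts G) {l : List V}
    (hl : IsLegalSeq G l) : ∃ l', IsTotalDomSeq G l' ∧ l.length ≤ l'.length := by
  by_cases hdom : IsTotalDomSet G {v | v ∈ l}
  · exact ⟨l, ⟨hl, hdom⟩, le_rfl⟩
  obtain ⟨v, hv⟩ : ∃ v, ∀ u ∈ l, ¬ G.Adj v u := by simpa [IsTotalDomSet] using hdom
  obtain ⟨w, hw⟩ := hG v
  have hl' := hl.concat hw.symm fun u hu h => hv u hu h.symm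
  have : l.length < Fintype.card V := by simpa using hl'.1.length_le_card
  obtain ⟨l', hl'dom, hlen⟩ := hl'.exists_isTotalDomSeq hG
  exact ⟨l', hl'dom, by simp at hlen; omega⟩
termination_by Fintype.card V - l.length

theorem IsLegalSeq.length_le_grundyTotalDomNum [Fintype V] (hG : NoIsolatedVerts G)
    {l : List V} (hl : IsLegalSeq G l) : l.length ≤ grundyTotalDomNum G := by
  obtain ⟨l', hl', hlen⟩ := hl.exists_isTotalDomSeq hG
  refine hlen.trans (le_csSup ⟨Fintype.card V, ?_⟩ ⟨l', hl', rfl⟩)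
  rintro _ ⟨l'', hl'', rfl⟩
  exact hl''.1.1.length_le_card

theorem IsBipartitionOf.isLegalSeq_append {A B : Set V} (hbip : IsBipartitionOf G A B)
    (hG : NoIsolatedVerts G) {l₁ l₂ : List V} (h₁ : IsLegalSeq G l₁) (h₂ : IsLegalSeq G l₂)
    (hl₁ : ∀ u ∈ l₁, u ∈ A) (hl₂ : ∀ v ∈ l₂, v ∈ B) : IsLegalSeq G (l₁ ++ l₂) :=
  h₁.append h₂ (fun v _ => hG v) fun u hu v hv _ hvw huw =>
    hbip.symm.not_adj (hl₂ v hv) (hbip.neighborSet_subset (hl₁ u hu) huw) hvw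

/-- The setting of the theorem, stated symmetrically in the two sides: `k` is the number of
non-neighbours that every vertex has on the opposite side. -/
structure SixBipartition [Fintype V] (G : SimpleGraph V) (A B : Set V) (k : ℕ) : Prop where
  bip : IsBipartitionOf G A B
  twinFree : FalseTwinFree G
  noIsolated : NoIsolatedVerts G
  ncard_eq : A.ncard = B.ncard
  codegree_left : ∀ a ∈ A, (B \ G.neighborSet a).ncard = k
  codegree_right : ∀ b ∈ B, (A \ G.neighborSet b).ncard = k
  grundy_le : grundyTotalDomNum G ≤ 6
  le_totalDomNum : 6 ≤ totalDomNum G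

namespace SixBipartition

variable [Fintype V] {A B : Set V} {k : ℕ}

theorem symm (hS : SixBipartition G A B k) : SixBipartition G B A k :=
  ⟨hS.bip.symm, hS.twinFree, hS.noIsolated, hS.ncard_eq.symm, hS.codegree_right,
    hS.codegree_left, hS.grundy_le, hS.le_totalDomNum⟩

theorem exists_adj_not_adj (hS : SixBipartition G A B k) {a x : V} (ha : a ∈ A) (hx : x ∈ A)
    (hne : a ≠ x) : ∃ w, G.Adj x w ∧ ¬ G.Adj a w := by
  refine hS.twinFree.exists_adj_not_adj hne ?_
  have hdeg {v : V} (hv : v ∈ A) : (G.neighborSet v).ncard = B.ncard - k := by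
    have hsub := hS.bip.neighborSet_subset hv
    have := Set.ncard_le_ncard hsub
    rw [← hS.codegree_left v hv, Set.ncard_sdiff hsub]
    omega
  rw [hdeg ha, hdeg hx]

theorem three_le_ncard (hS : SixBipartition G A B k) : 3 ≤ A.ncard := by
  have h6 := hS.le_totalDomNum.trans (totalDomNum_le_ncard hS.noIsolated.isTotalDomSet_univ)
  rw [Set.ncard_univ, ← hS.bip.ncard_add_ncard, ← hS.ncard_eq] at h6
  omega

theorem subset_neighborSet_union_of_le_one (hS : SixBipartition G A B k) (hk : k ≤ 1) {a a' : V}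
    (ha : a ∈ A) (ha' : a' ∈ A) (hne : a ≠ a') : B ⊆ G.neighborSet a ∪ G.neighborSet a' := by
  intro y hy
  by_contra hy'
  obtain ⟨w, hwa', hwa⟩ := hS.exists_adj_not_adj ha ha' hne
  have hle : (B \ G.neighborSet a).ncard ≤ 1 := (hS.codegree_left a ha).trans_le hk
  have hyw : y = w := (Set.ncard_le_one_iff (Set.toFinite _)).1 hle
    ⟨hy, fun h => hy' (Or.inl h)⟩ ⟨hS.bip.neighborSet_subset ha' hwa', hwa⟩
  exact hy' (Or.inr (hyw ▸ hwa'))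

theorem two_le (hS : SixBipartition G A B k) : 2 ≤ k := by
  classical
  by_contra! hk
  obtain ⟨a, ha, a', ha', hne⟩ := (Set.one_lt_ncard (Set.toFinite A)).1 (by
    linarith [hS.three_le_ncard])
  obtain ⟨b, hb, b', hb', hne'⟩ := (Set.one_lt_ncard (Set.toFinite B)).1 (by
    linarith [hS.symm.three_le_ncard])
  have hdom : IsTotalDomSet G (({a, a', b, b'} : Finset V) : Set V) := by
    intro v
    rcases hS.bip.mem_or_mem v with hv | hv
    · rcases hS.symm.subset_neighborSet_union_of_le_one (by omega) hb hb' hne' hv with h | h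
      · exact ⟨b, by simp, G.adj_symm h⟩
      · exact ⟨b', by simp, G.adj_symm h⟩
    · rcases hS.subset_neighborSet_union_of_le_one (by omega) ha ha' hne hv with h | h
      · exact ⟨a, by simp, G.adj_symm h⟩
      · exact ⟨a', by simp, G.adj_symm h⟩
  have h6 := hS.le_totalDomNum.trans (totalDomNum_le_ncard hdom)
  rw [Set.ncard_coe_finset] at h6
  linarith [Finset.card_le_four (a := a) (b := a') (c := b) (d := b')]

theorem exists_ne_not_adj_not_adj (hS : SixBipartition G A B k) :
    ∃ a₁ ∈ A, ∃ a₂ ∈ A, a₁ ≠ a₂ ∧ ∃ b ∈ B, ¬ G.Adj a₁ b ∧ ¬ G.Adj a₂ b := by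
  classical
  -- otherwise the sets `B \ N(a)`, `a ∈ A`, are disjoint, so `|A| * k ≤ |B| = |A|`
  by_contra! h
  have hdisj : (A.toFinset : Set V).PairwiseDisjoint fun a => (B \ G.neighborSet a).toFinset := by
    intro a₁ ha₁ a₂ ha₂ hne
    rw [Function.onFun, Set.disjoint_toFinset]
    refine Set.disjoint_left.2 fun b hb₁ hb₂ => hb₂.2 ?_
    exact h a₁ (by simpa using ha₁) a₂ (by simpa using ha₂) hne b hb₁.1 hb₁.2
  have hsub : A.toFinset.biUnion (fun a => (B \ G.neighborSet a).toFinset) ⊆ B.toFinset := by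
    intro b
    simp only [Finset.mem_biUnion, Set.mem_toFinset, Set.mem_sdiff]
    exact fun ⟨_, _, hb, _⟩ => hb
  have hcount := Finset.card_le_card hsub
  rw [Finset.card_biUnion hdisj, Finset.sum_congr rfl (g := fun _ => k) fun a ha => by
    rw [← Set.ncard_eq_toFinset_card', hS.codegree_left a (by simpa using ha)],
    Finset.sum_const, smul_eq_mul, ← Set.ncard_eq_toFinset_card', ← Set.ncard_eq_toFinset_card',
    ← hS.ncard_eq] at hcount
  nlinarith [hS.three_le_ncard, hS.two_le]

theorem exists_isLegalSeq_length_three (hS : SixBipartition G A B k) :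
    ∃ l : List V, (∀ v ∈ l, v ∈ A) ∧ IsLegalSeq G l ∧ l.length = 3 := by
  obtain ⟨a₁, ha₁, a₂, ha₂, hne, b, hb, hb₁, hb₂⟩ := hS.exists_ne_not_adj_not_adj
  obtain ⟨w, hw₂, hw₁⟩ := hS.exists_adj_not_adj ha₁ ha₂ hne
  obtain ⟨c, hc⟩ := hS.noIsolated b
  refine ⟨[a₁] ++ [a₂] ++ [c], ?_,
    ((isLegalSeq_singleton a₁).concat hw₂ ?_).concat hc.symm ?_, rfl⟩
  · simp [ha₁, ha₂, hS.bip.symm.neighborSet_subset hb hc]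
  · simpa using hw₁
  · simp [hb₁, hb₂]

theorem length_le_three (hS : SixBipartition G A B k) {l : List V} (hl : IsLegalSeq G l)
    (hlA : ∀ v ∈ l, v ∈ A) : l.length ≤ 3 := by
  obtain ⟨l₂, hl₂B, hl₂, hlen⟩ := hS.symm.exists_isLegalSeq_length_three
  have := (hS.bip.isLegalSeq_append hS.noIsolated hl hl₂ hlA hl₂B).length_le_grundyTotalDomNum
    hS.noIsolated
  rw [List.length_append, hlen] at this
  linarith [hS.grundy_le]

theorem exists_not_adj_not_adj (hS : SixBipartition G A B k) (a₁ a₂ : V) :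
    ∃ b ∈ B, ¬ G.Adj a₁ b ∧ ¬ G.Adj a₂ b := by
  classical
  by_contra! hcov
  obtain ⟨l, hlB, hl, hlen⟩ := hS.symm.exists_isLegalSeq_length_three
  obtain ⟨t, ht, htl⟩ : ∃ t ∈ A, ∀ u ∈ l, ¬ G.Adj u t := by
    by_contra! hlcov
    have hdom : IsTotalDomSet G ((({a₁, a₂} : Finset V) ∪ l.toFinset : Finset V) : Set V) := by
      intro v
      rcases hS.bip.mem_or_mem v with hv | hv
      · obtain ⟨u, hu, huv⟩ := hlcov v hv
        exact ⟨u, by simp [hu], huv.symm⟩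
      · by_cases h : G.Adj a₁ v
        · exact ⟨a₁, by simp, h.symm⟩
        · exact ⟨a₂, by simp, (hcov v hv h).symm⟩
    have h6 := hS.le_totalDomNum.trans (totalDomNum_le_ncard hdom)
    rw [Set.ncard_coe_finset] at h6
    linarith [Finset.card_union_le ({a₁, a₂} : Finset V) l.toFinset,
      Finset.card_le_two (a := a₁) (b := a₂), l.toFinset_card_le]
  obtain ⟨b, hb⟩ := hS.noIsolated t
  have := hS.symm.length_le_three (hl.concat hb.symm htl)
    (by simpa [or_imp, forall_and, hS.bip.neighborSet_subset ht hb] using hlB)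
  simp [hlen] at this

theorem sdiff_subset_neighborSet (hS : SixBipartition G A B k) {a₁ a₂ x : V} (ha₁ : a₁ ∈ A)
    (ha₂ : a₂ ∈ A) (hx : x ∈ A) (hxa₁ : x ≠ a₁)
    (hsub : G.neighborSet x ⊆ G.neighborSet a₁ ∪ G.neighborSet a₂) :
    G.neighborSet a₂ \ G.neighborSet a₁ ⊆ G.neighborSet x := by
  intro y ⟨(hy₂ : G.Adj a₂ y), (hy₁ : ¬ G.Adj a₁ y)⟩
  by_contra (hyx : ¬ G.Adj x y)
  obtain ⟨o, ho, ho₁, ho₂⟩ := hS.exists_not_adj_not_adj a₁ a₂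
  have hox : ¬ G.Adj x o := fun h => (hsub h).elim ho₁ ho₂
  obtain ⟨c, hc⟩ := hS.noIsolated o
  obtain ⟨w, hwx, hwa₁⟩ := hS.exists_adj_not_adj ha₁ hx hxa₁.symm
  have hl := (((isLegalSeq_singleton a₁).concat hwx (by simpa using hwa₁)).concat hy₂
    (by simp [hy₁, hyx])).concat hc.symm (by simp [ho₁, ho₂, hox])
  have := hS.length_le_three hl
    (by simp [ha₁, ha₂, hx, hS.bip.symm.neighborSet_subset ho hc])
  simp at this

theorem ncard_sdiff_union_eq_one (hS : SixBipartition G A B k) {a x : V} (ha : a ∈ A)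
    (hx : x ∈ A) (hne : a ≠ x) : (B \ (G.neighborSet a ∪ G.neighborSet x)).ncard = 1 := by
  refine le_antisymm ((Set.ncard_le_one_iff (Set.toFinite _)).2 fun {o₁ o₂} ho₁ ho₂ => ?_) ?_
  · obtain ⟨ho₁B, ho₁N⟩ := ho₁
    obtain ⟨ho₂B, ho₂N⟩ := ho₂
    simp only [Set.mem_union, SimpleGraph.mem_neighborSet, not_or] at ho₁N ho₂N
    by_contra ho
    obtain ⟨c₃, hc₃, hc₃o₂⟩ := hS.symm.exists_adj_not_adj ho₂B ho₁B (Ne.symm ho)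
    obtain ⟨c₄, hc₄⟩ := hS.noIsolated o₂
    obtain ⟨w, hwx, hwa⟩ := hS.exists_adj_not_adj ha hx hne
    have hl := (((isLegalSeq_singleton a).concat hwx (by simpa using hwa)).concat hc₃.symm
      (by simp [ho₁N])).concat hc₄.symm (by simp [ho₂N, G.adj_comm c₃, hc₃o₂])
    have := hS.length_le_three hl (by simp [ha, hx, hS.bip.symm.neighborSet_subset ho₁B hc₃,
      hS.bip.symm.neighborSet_subset ho₂B hc₄])
    simp at this
  · obtain ⟨b, hb, hba, hbx⟩ := hS.exists_not_adj_not_adj a x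
    exact (Set.ncard_pos (Set.toFinite _)).2 ⟨b, hb, fun h => h.elim hba hbx⟩

theorem ncard_inter_sdiff_neighborSet (hS : SixBipartition G A B k) {a₁ a₂ x : V}
    (ha₁ : a₁ ∈ A) (ha₂ : a₂ ∈ A) (hx : x ∈ A) (hne : a₁ ≠ a₂)
    (hsub : G.neighborSet x ⊆ G.neighborSet a₁ ∪ G.neighborSet a₂)
    (hcov : (G.neighborSet a₂ \ G.neighborSet a₁) ∪ (G.neighborSet a₁ \ G.neighborSet a₂) ⊆
      G.neighborSet x) :
    ((G.neighborSet a₁ ∩ G.neighborSet a₂) \ G.neighborSet x).ncard = k - 1 := by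
  have hsplit : B \ G.neighborSet x = (B \ (G.neighborSet a₁ ∪ G.neighborSet a₂)) ∪
      ((G.neighborSet a₁ ∩ G.neighborSet a₂) \ G.neighborSet x) := by
    ext b
    have := @hsub b
    have := @hcov b
    have : b ∈ G.neighborSet a₁ → b ∈ B := (hS.bip.neighborSet_subset ha₁ ·)
    simp only [Set.mem_sdiff, Set.mem_union, Set.mem_inter_iff] at *
    tauto
  have hdisj : Disjoint (B \ (G.neighborSet a₁ ∪ G.neighborSet a₂))
      ((G.neighborSet a₁ ∩ G.neighborSet a₂) \ G.neighborSet x) :=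
    Set.disjoint_left.2 fun _ hb hb' => hb.2 (Or.inl hb'.1.1)
  have hcodeg := hS.codegree_left x hx
  rw [hsplit, Set.ncard_union_eq hdisj, hS.ncard_sdiff_union_eq_one ha₁ ha₂ hne] at hcodeg
  omega

theorem of_regular {n : ℕ} [Nonempty V] (hbip : IsBipartitionOf G A B) (hftf : FalseTwinFree G)
    (hcard : Fintype.card V = 2 * n) (hreg : ∀ v : V, (G.neighborSet v).ncard = n - k)
    (ht : totalDomNum G = 6) (hg : grundyTotalDomNum G = 6) : SixBipartition G A B k := by
  have hG := noIsolatedVerts_of_totalDomNum_pos (G := G) (by omega)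
  obtain ⟨v⟩ := ‹Nonempty V›
  have hdeg : 0 < n - k := hreg v ▸ (Set.ncard_pos (Set.toFinite _)).2 (hG v)
  have hAB := hbip.ncard_eq_ncard hreg hdeg
  have hsum := hbip.ncard_add_ncard
  rw [Nat.card_eq_fintype_card, hcard] at hsum
  have hcodeg {A B : Set V} (hbip : IsBipartitionOf G A B) (hB : B.ncard = n) (a : V)
      (ha : a ∈ A) : (B \ G.neighborSet a).ncard = k := by
    rw [Set.ncard_sdiff (hbip.neighborSet_subset ha), hB, hreg]
    omega
  exact ⟨hbip, hftf, hG, hAB, hcodeg hbip (by omega), hcodeg hbip.symm (by omega), hg.le, ht.ge⟩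

end SixBipartition

end

/-- Every vertex of `A'` is adjacent to all of `B₁ ∪ B₂` and
has exactly `k − 1` non-neighbors in `B'`. -/
theorem claim_k_minus_one
    {V : Type*} [Fintype V] (G : SimpleGraph V) (n k : ℕ) (A B : Set V)
    (hbip : IsBipartitionOf G A B) (hftf : FalseTwinFree G)
    (hcard : Fintype.card V = 2 * n)
    (hreg : ∀ v : V, (G.neighborSet v).ncard = n - k)
    (ht : totalDomNum G = 6) (hg : grundyTotalDomNum G = 6)
    (a₁ a₂ : V) (ha₁ : a₁ ∈ A) (ha₂ : a₂ ∈ A) (hne : a₁ ≠ a₂)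
    (B₁ B₂ B' A' : Set V)
    (hB₂ : B₂ = G.neighborSet a₁ \ G.neighborSet a₂)
    (hB₁ : B₁ = G.neighborSet a₂ \ G.neighborSet a₁)
    (hB' : B' = G.neighborSet a₁ ∩ G.neighborSet a₂)
    (hA' : A' = {a ∈ A \ {a₁, a₂} | G.neighborSet a ⊆ B₁ ∪ B₂ ∪ B'})
    (x : V) (hx : x ∈ A') :
    B₁ ∪ B₂ ⊆ G.neighborSet x ∧ (B' \ G.neighborSet x).ncard = k - 1 := by
  subst hB₁ hB₂ hB' hA'
  obtain ⟨⟨hxA, hx₁₂⟩, hxN⟩ := hx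
  simp only [Set.mem_insert_iff, Set.mem_singleton_iff, not_or] at hx₁₂
  have : Nonempty V := ⟨x⟩
  have hS : SixBipartition G A B k := .of_regular hbip hftf hcard hreg ht hg
  have hsub : G.neighborSet x ⊆ G.neighborSet a₁ ∪ G.neighborSet a₂ := by
    refine hxN.trans fun b => ?_
    simp only [Set.mem_union, Set.mem_sdiff, Set.mem_inter_iff]
    tauto
  have hcov := Set.union_subset (hS.sdiff_subset_neighborSet ha₁ ha₂ hxA hx₁₂.1 hsub)
    (hS.sdiff_subset_neighborSet ha₂ ha₁ hxA hx₁₂.2 (Set.union_comm _ _ ▸ hsub))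
  exact ⟨hcov, hS.ncard_inter_sdiff_neighborSet ha₁ ha₂ hxA hne hsub hcov⟩
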